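/- arXiv:2409.03626 — 7 statements merged into one kernel-verified Lean document; each statement's English description precedes it below -/
import Mathlib

section
/- There exists a constant c > 0 (one may take c = (log 2)/8) such that for every integer n ≥ 1 and every nonincreasing tuple Λ = (Λ_1, …, Λ_n) ∈ ℝ^n (i.e. Λ_1 ≥ Λ_2 ≥ … ≥ Λ_n), one has c · min(‖Λ‖₁, n) ≤ Σ_{1 ≤ i < j ≤ n} log(1 + (Λ_i − Λ_j)/(j − i)). -/
open Finset

private lemma auxLog {x : ℝ} (hx : 0 ≤ x) : Real.log 2 * min x 1 ≤ Real.log (1 + x) := by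
  rcases le_total 1 x with h | h
  · rw [min_eq_right h, mul_one]
    have : (2:ℝ) ≤ 1 + x := by linarith
    exact Real.log_le_log (by norm_num) this
  · rw [min_eq_left h]
    have hc := strictConcaveOn_log_Ioi.concaveOn.2 (Set.mem_Ioi.2 one_pos)
      (Set.mem_Ioi.2 two_pos) (by linarith : (0:ℝ) ≤ 1 - x) hx (by ring)
    simp only [smul_eq_mul, Real.log_one, mul_zero, zero_add] at hc
    have he : (1 - x) * 1 + x * 2 = 1 + x := by ring
    rw [he] at hc
    linarith

/-- There is a constant `c > 0` (one may take `c = (log 2)/8`) such that for every `n ≥ 1`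
and every nonincreasing `Λ : Fin n → ℝ`,
`c * min(‖Λ‖₁, n) ≤ ∑_{i < j} log (1 + (Λ i - Λ j)/(j - i))`,
where `‖Λ‖₁ = ⨅ t, ∑ i, |Λ i - t|`. -/
theorem stmt0 :
    ∃ c : ℝ, 0 < c ∧
      ∀ n : ℕ, 1 ≤ n → ∀ Λ : Fin n → ℝ,
        (∀ i j : Fin n, i ≤ j → Λ j ≤ Λ i) →
        c * min (⨅ t : ℝ, ∑ i, |Λ i - t|) (n : ℝ) ≤
          ∑ i : Fin n, ∑ j : Fin n,
            if i < j then
              Real.log (1 + (Λ i - Λ j) / (((j : ℕ) : ℝ) - ((i : ℕ) : ℝ)))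
            else 0 := by
  refine ⟨Real.log 2 / 8, by positivity, ?_⟩
  intro n hn Λ hmono
  have hbdd : BddBelow (Set.range fun t : ℝ => ∑ i, |Λ i - t|) := by
    refine ⟨0, ?_⟩
    rintro x ⟨t, rfl⟩
    positivity
  rcases Nat.lt_or_ge n 2 with h1 | h2
  · have hn1 : n = 1 := by omega
    subst hn1
    have hinf : (⨅ t : ℝ, ∑ i : Fin 1, |Λ i - t|) = 0 := by
      apply le_antisymm
      · have := ciInf_le hbdd (Λ 0)
        simpa using this
      · apply le_ciInf
        intro t
        positivity
    rw [hinf]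
    norm_num [Fin.sum_univ_one]
  -- main case : n ≥ 2
  have hn0 : (0:ℝ) < n := by positivity
  have hlog2 : (0:ℝ) ≤ Real.log 2 := Real.log_nonneg (by norm_num)
  set m : Fin n := ⟨(n-1)/2, by omega⟩ with hm
  set t : ℝ := Λ m with ht
  set f : Fin n → ℝ := fun k => |Λ k - t| with hf
  set g : Fin n → ℝ := fun k => min (f k) (n/2) with hg
  have hg0 : ∀ k, 0 ≤ g k := fun k => le_min (abs_nonneg _) (by positivity)
  have hfi : ∀ i : Fin n, i ≤ m → f i = Λ i - t := fun i hi =>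
    abs_of_nonneg (by linarith [hmono i m hi])
  have hfj : ∀ j : Fin n, m ≤ j → f j = t - Λ j := fun j hj => by
    show |Λ j - t| = t - Λ j
    rw [abs_sub_comm]; exact abs_of_nonneg (by linarith [hmono m j hj])
  -- the key pointwise bound
  have key : ∀ i j : Fin n, i ≤ m → m < j →
      Real.log 2 / n * (g i + g j) ≤
        Real.log (1 + (Λ i - Λ j) / (((j : ℕ) : ℝ) - ((i : ℕ) : ℝ))) := by
    intro i j hi hj
    have hij : (i : ℕ) < (j : ℕ) := lt_of_le_of_lt hi hj
    set d : ℝ := ((j : ℕ) : ℝ) - ((i : ℕ) : ℝ) with hd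
    have hd0 : 0 < d := by
      rw [hd]; have : ((i:ℕ):ℝ) < ((j:ℕ):ℝ) := by exact_mod_cast hij
      linarith
    have hdn : d ≤ n := by
      rw [hd]
      have : ((j:ℕ):ℝ) ≤ n := by exact_mod_cast (j.is_lt.le)
      have : (0:ℝ) ≤ ((i:ℕ):ℝ) := by positivity
      linarith [show ((j:ℕ):ℝ) ≤ n from by exact_mod_cast j.is_lt.le]
    set δ : ℝ := Λ i - Λ j with hδ
    have hδf : δ = f i + f j := by
      rw [hδ, hfi i hi, hfj j hj.le]; ring
    have hδ0 : 0 ≤ δ := by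
      rw [hδf]; positivity
    have h1 : g i + g j ≤ min δ n := by
      refine le_min ?_ ?_
      · rw [hδf]
        exact add_le_add (min_le_left _ _) (min_le_left _ _)
      · have := add_le_add (min_le_right (f i) ((n:ℝ)/2)) (min_le_right (f j) ((n:ℝ)/2))
        rw [hg]; simpa using this.trans_eq (by ring)
    have e1 : min (δ/n) 1 = min δ n / n := by
      rw [← min_div_div_right hn0.le δ (n:ℝ), div_self hn0.ne']
    calc Real.log 2 / n * (g i + g j)
        ≤ Real.log 2 / n * min δ n := by
          apply mul_le_mul_of_nonneg_left h1 (by positivity)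
      _ = Real.log 2 * min (δ/n) 1 := by rw [e1]; ring
      _ ≤ Real.log 2 * min (δ/d) 1 := by
          apply mul_le_mul_of_nonneg_left _ hlog2
          apply min_le_min _ le_rfl
          gcongr
      _ ≤ Real.log (1 + δ/d) := auxLog (by positivity)
  -- nonnegativity of each summand
  have hterm0 : ∀ i j : Fin n,
      (0:ℝ) ≤ if i < j then
        Real.log (1 + (Λ i - Λ j) / (((j : ℕ) : ℝ) - ((i : ℕ) : ℝ))) else 0 := by
    intro i j
    split_ifs with h
    · apply Real.log_nonneg
      have hij : ((i:ℕ):ℝ) < ((j:ℕ):ℝ) := by exact_mod_cast h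
      have hΛ : 0 ≤ Λ i - Λ j := by linarith [hmono i j h.le]
      have : 0 ≤ (Λ i - Λ j) / (((j : ℕ) : ℝ) - ((i : ℕ) : ℝ)) := by
        apply div_nonneg hΛ; linarith
      linarith
    · exact le_rfl
  set A : Finset (Fin n) := Finset.Iic m with hA
  set B : Finset (Fin n) := Finset.Ioi m with hB
  have hAB : ∑ k ∈ A, g k + ∑ k ∈ B, g k = ∑ k, g k := by
    rw [hA, hB]
    have e1 : (Finset.Iic m) = Finset.univ.filter (· ≤ m) := by ext x; simp
    have e2 : (Finset.Ioi m) = Finset.univ.filter (fun x => ¬ x ≤ m) := by ext x; simp [not_le]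
    rw [e1, e2, Finset.sum_filter_add_sum_filter_not]
  have hAcard : A.card = (n-1)/2 + 1 := by rw [hA, Fin.card_Iic]
  have hBcard : B.card = n - 1 - (n-1)/2 := by rw [hB, Fin.card_Ioi]
  have hcardA : (n:ℝ)/4 ≤ (A.card : ℝ) := by
    rw [hAcard]
    have h4 : n ≤ 4 * ((n-1)/2 + 1) := by omega
    have h5 := (Nat.cast_le (α := ℝ)).2 h4
    push_cast at h5 ⊢
    linarith
  have hcardB : (n:ℝ)/4 ≤ (B.card : ℝ) := by
    rw [hBcard]
    have h4 : n ≤ 4 * (n - 1 - (n-1)/2) := by omega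
    have h5 := (Nat.cast_le (α := ℝ)).2 h4
    push_cast [Nat.cast_sub (by omega : (n-1)/2 ≤ n - 1), Nat.cast_sub (by omega : 1 ≤ n)] at h5 ⊢
    linarith
  have hsumA : 0 ≤ ∑ k ∈ A, g k := Finset.sum_nonneg fun k _ => hg0 k
  have hsumB : 0 ≤ ∑ k ∈ B, g k := Finset.sum_nonneg fun k _ => hg0 k
  have step1 : ∑ i ∈ A, ∑ j ∈ B, (Real.log 2 / n * (g i + g j)) ≤
      ∑ i : Fin n, ∑ j : Fin n, if i < j then
        Real.log (1 + (Λ i - Λ j) / (((j:ℕ):ℝ) - ((i:ℕ):ℝ))) else 0 := by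
    calc ∑ i ∈ A, ∑ j ∈ B, (Real.log 2 / n * (g i + g j))
        ≤ ∑ i ∈ A, ∑ j ∈ B, (if i < j then
            Real.log (1 + (Λ i - Λ j) / (((j:ℕ):ℝ) - ((i:ℕ):ℝ))) else 0) := by
          refine Finset.sum_le_sum fun i hi => Finset.sum_le_sum fun j hj => ?_
          have hi' : i ≤ m := by simpa [hA] using hi
          have hj' : m < j := by simpa [hB] using hj
          rw [if_pos (lt_of_le_of_lt hi' hj')]
          exact key i j hi' hj'
      _ ≤ ∑ i ∈ A, ∑ j : Fin n, (if i < j then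
            Real.log (1 + (Λ i - Λ j) / (((j:ℕ):ℝ) - ((i:ℕ):ℝ))) else 0) := by
          refine Finset.sum_le_sum fun i _ => ?_
          exact Finset.sum_le_sum_of_subset_of_nonneg (Finset.subset_univ _)
            fun j _ _ => hterm0 i j
      _ ≤ _ := Finset.sum_le_sum_of_subset_of_nonneg (Finset.subset_univ _)
            fun i _ _ => Finset.sum_nonneg fun j _ => hterm0 i j
  have hsum : ∑ i ∈ A, ∑ j ∈ B, (g i + g j)
      = (B.card : ℝ) * ∑ i ∈ A, g i + (A.card : ℝ) * ∑ j ∈ B, g j := by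
    calc ∑ i ∈ A, ∑ j ∈ B, (g i + g j)
        = ∑ i ∈ A, ((B.card : ℝ) * g i + ∑ j ∈ B, g j) := by
          refine Finset.sum_congr rfl fun i _ => ?_
          rw [Finset.sum_add_distrib, Finset.sum_const, nsmul_eq_mul]
      _ = _ := by
          rw [Finset.sum_add_distrib, Finset.sum_const, nsmul_eq_mul, ← Finset.mul_sum]
  have hNle : (⨅ t' : ℝ, ∑ i, |Λ i - t'|) ≤ ∑ k, f k := ciInf_le hbdd t
  have hminN : min (⨅ t' : ℝ, ∑ i, |Λ i - t'|) (n:ℝ) ≤ 2 * ∑ k, g k := by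
    by_cases hcase : ∀ k, f k ≤ (n:ℝ)/2
    · have hge : ∑ k, g k = ∑ k, f k :=
        Finset.sum_congr rfl fun k _ => min_eq_left (hcase k)
      have hfnn : 0 ≤ ∑ k, f k := Finset.sum_nonneg fun k _ => abs_nonneg _
      calc min (⨅ t' : ℝ, ∑ i, |Λ i - t'|) (n:ℝ) ≤ _ := min_le_left _ _
        _ ≤ ∑ k, f k := hNle
        _ ≤ 2 * ∑ k, g k := by rw [hge]; linarith
    · push_neg at hcase
      obtain ⟨k, hk⟩ := hcase
      have hgk : g k = (n:ℝ)/2 := min_eq_right hk.le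
      have h6 : (n:ℝ)/2 ≤ ∑ k, g k :=
        hgk ▸ Finset.single_le_sum (fun k _ => hg0 k) (Finset.mem_univ k)
      calc min (⨅ t' : ℝ, ∑ i, |Λ i - t'|) (n:ℝ) ≤ (n:ℝ) := min_le_right _ _
        _ ≤ 2 * ∑ k, g k := by linarith
  calc Real.log 2 / 8 * min (⨅ t' : ℝ, ∑ i, |Λ i - t'|) (n:ℝ)
      ≤ Real.log 2 / 8 * (2 * ∑ k, g k) :=
        mul_le_mul_of_nonneg_left hminN (by positivity)
    _ = Real.log 2 / n * ((n:ℝ)/4 * ∑ k, g k) := by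
        field_simp
        ring
    _ ≤ Real.log 2 / n * ((B.card:ℝ) * ∑ i ∈ A, g i + (A.card:ℝ) * ∑ j ∈ B, g j) := by
        apply mul_le_mul_of_nonneg_left _ (by positivity)
        calc (n:ℝ)/4 * ∑ k, g k
            = (n:ℝ)/4 * ∑ i ∈ A, g i + (n:ℝ)/4 * ∑ j ∈ B, g j := by rw [← hAB]; ring
          _ ≤ _ := add_le_add (mul_le_mul_of_nonneg_right hcardB hsumA)
              (mul_le_mul_of_nonneg_right hcardA hsumB)
    _ = ∑ i ∈ A, ∑ j ∈ B, (Real.log 2 / n * (g i + g j)) := by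
        rw [← hsum, Finset.mul_sum]
        exact Finset.sum_congr rfl fun i _ => by rw [Finset.mul_sum]
    _ ≤ _ := step1
end

section
/- Let P be a real polynomial of degree at most D, where D ≥ 1 is an integer, and let k be an integer with 1 ≤ k ≤ D. If S ≥ 0 satisfies |P(1/n)| ≤ S for every integer n ≥ D², then for every t ∈ [0, 1/(2D²)] the k-th derivative of P satisfies |P^{(k)}(t)| ≤ (2^{2k+1} · D^{4k} / (2k−1)!!) · S, where (2k−1)!! := ∏_{j=1}^{k} (2j−1). -/
/-!
The sample points `1/n`, `n ≥ D²`, are dense enough in `I = [0, 1/D²]` to control `P` on all of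
`I`. Let `|P|` attain its maximum `M` on `I` at `x₀`, with `1/(n+1) < x₀ < 1/n`. Linear
interpolation between these two sample points is off by at most `|P''| · gap² / 8`, and Markov's
inequality for `P''` on a window of length `1/(n+1)` ending in `I` bounds this by `M/6`; hence
`M ≤ S + M/6` and `|P| ≤ 2S` on `I`. Markov's inequality for `P^{(k)}` at the left endpoint of
`[t, t + 1/(2D²)] ⊆ I`, i.e. `|p^{(k)}(a)| ≤ (2/(b-a))^k T_D^{(k)}(1) max_{[a,b]} |p|` with
`T_D^{(k)}(1) ≤ D^{2k}/(2k-1)!!`, then gives the claim.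
-/

open Polynomial Polynomial.Chebyshev Set Filter

namespace Polynomial.Chebyshev

theorem iterate_derivative_T_real_eval_one_le (n k : ℕ) :
    (derivative^[k] (T ℝ n)).eval 1 ≤
      (n : ℝ) ^ (2 * k) / ∏ j ∈ Finset.Icc 1 k, (2 * (j : ℝ) - 1) := by
  have hden : ∏ j ∈ Finset.Icc 1 k, (2 * (j : ℝ) - 1) =
      ((∏ l ∈ Finset.range k, (2 * l + 1) : ℕ) : ℝ) := by
    rw [← Finset.Ico_add_one_right_eq_Icc, Finset.prod_Ico_eq_prod_range]
    push_cast
    refine Finset.prod_congr (by simp) fun l _ => ?_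
    ring
  have hnum : ∏ l ∈ Finset.range k, ((n : ℤ) ^ 2 - (l : ℤ) ^ 2) ≤ (n : ℤ) ^ (2 * k) := by
    rcases le_or_gt k n with hkn | hnk
    · calc _ ≤ ∏ _l ∈ Finset.range k, (n : ℤ) ^ 2 := by
            refine Finset.prod_le_prod (fun l hl => ?_) (fun l _ => by nlinarith)
            have : l < n := (Finset.mem_range.mp hl).trans_le hkn
            nlinarith
        _ = _ := by rw [Finset.prod_const, Finset.card_range, pow_mul]
    · rw [Finset.prod_eq_zero (Finset.mem_range.mpr hnk) (sub_self _)]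
      positivity
  rw [iterate_derivative_T_eval_one_eq_div, hden]
  gcongr
  exact_mod_cast hnum

theorem abs_eval_iterate_derivative_one_le {n k : ℕ} {p : ℝ[X]} (hp : p.natDegree ≤ n) {M : ℝ}
    (hM : ∀ x ∈ Icc (-1 : ℝ) 1, |p.eval x| ≤ M) :
    |(derivative^[k] p).eval 1| ≤ (derivative^[k] (T ℝ n)).eval 1 * M := by
  obtain hM0 | hMpos := (abs_nonneg _ |>.trans (hM 0 (by norm_num))).eq_or_lt
  · have hp0 : p = 0 := eq_zero_of_infinite_isRoot p <|
      (Icc_infinite (by norm_num : (-1 : ℝ) < 1)).mono fun x hx => abs_nonpos_iff.mp (hM0 ▸ hM x hx)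
    simp [hp0, ← hM0]
  have key : ∀ r : ℝ[X], r.natDegree ≤ n → (∀ x ∈ Icc (-1 : ℝ) 1, |r.eval x| ≤ M) →
      (derivative^[k] r).eval 1 ≤ (derivative^[k] (T ℝ n)).eval 1 * M := by
    intro r hr hrM
    have h := eval_iterate_derivative_le_of_forall_abs_le_one (P := Polynomial.C M⁻¹ * r) (k := k)
      le_rfl (natDegree_le_iff_degree_le.mp ((natDegree_C_mul_le _ _).trans hr)) fun x hx => by
        rw [eval_mul, eval_C, abs_mul, abs_inv, abs_of_pos hMpos, inv_mul_le_one₀ hMpos]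
        exact hrM x hx
    rwa [iterate_derivative_C_mul, eval_mul, eval_C, inv_mul_le_iff₀ hMpos, mul_comm] at h
  refine abs_le.mpr ⟨?_, key p hp hM⟩
  have := key (-p) (by rwa [natDegree_neg]) (by simpa using hM)
  rw [iterate_derivative_neg, eval_neg] at this
  linarith

end Polynomial.Chebyshev

namespace Polynomial

theorem iterate_derivative_comp_C_mul_X_add_C {R : Type*} [CommSemiring R] (p : R[X]) (u w : R)
    (k : ℕ) :
    derivative^[k] (p.comp (C u * X + C w)) =
      C (u ^ k) * (derivative^[k] p).comp (C u * X + C w) := by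
  induction k with
  | zero => simp
  | succ k ih =>
    rw [Function.iterate_succ_apply', ih, derivative_C_mul, derivative_comp,
      Function.iterate_succ_apply']
    simp only [derivative_add, derivative_C_mul_X, derivative_C, add_zero, pow_succ, C_mul]
    ring

theorem abs_eval_iterate_derivative_endpoint_le {n k : ℕ} {p : ℝ[X]} (hp : p.natDegree ≤ n)
    {a b M e : ℝ} (hab : a < b) (hM : ∀ x ∈ Icc a b, |p.eval x| ≤ M) (he : e = a ∨ e = b) :
    |(derivative^[k] p).eval e| ≤
      (2 / (b - a)) ^ k * ((n : ℝ) ^ (2 * k) / ∏ j ∈ Finset.Icc 1 k, (2 * (j : ℝ) - 1)) * M := by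
  -- `x ↦ u * x + w` maps `[-1, 1]` onto `[a, b]` and `1` to `e`.
  set w := (a + b) / 2 with hw
  set u := e - w with hu_def
  have hu : |u| = (b - a) / 2 := by
    rcases he with rfl | rfl
    · rw [abs_of_neg (by linarith)]; ring
    · rw [abs_of_pos (by linarith)]; ring
  set q := p.comp (C u * X + C w)
  have hq : q.natDegree ≤ n :=
    natDegree_comp_le.trans (by nlinarith [natDegree_linear_le (a := u) (b := w)])
  have hqM : ∀ x ∈ Icc (-1 : ℝ) 1, |q.eval x| ≤ M := by
    intro x hx
    have hux : |u * x| ≤ (b - a) / 2 := by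
      rw [abs_mul, ← hu]
      exact mul_le_of_le_one_right (abs_nonneg u) (abs_le.mpr hx)
    simp only [q, eval_comp, eval_add, eval_mul, eval_C, eval_X]
    obtain ⟨hl, hr⟩ := abs_le.mp hux
    exact hM _ ⟨by linarith, by linarith⟩
  have hM0 : 0 ≤ M := (abs_nonneg _).trans (hM a (left_mem_Icc.mpr hab.le))
  have hmarkov := Chebyshev.abs_eval_iterate_derivative_one_le (k := k) hq hqM
  rw [iterate_derivative_comp_C_mul_X_add_C, eval_mul, eval_C, eval_comp] at hmarkov
  simp only [eval_add, eval_mul, eval_C, eval_X, mul_one, u, sub_add_cancel, abs_mul,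
    abs_pow] at hmarkov
  rw [hu] at hmarkov
  calc |(derivative^[k] p).eval e|
      = (2 / (b - a)) ^ k * (((b - a) / 2) ^ k * |(derivative^[k] p).eval e|) := by
        rw [← mul_assoc, ← mul_pow, div_mul_div_cancel₀ (by linarith), div_self two_ne_zero,
          one_pow, one_mul]
    _ ≤ (2 / (b - a)) ^ k * ((derivative^[k] (T ℝ n)).eval 1 * M) := by gcongr
    _ ≤ _ := by
        rw [← mul_assoc]
        gcongr
        exact Chebyshev.iterate_derivative_T_real_eval_one_le n k

theorem exists_eval_iterate_derivative_two_eq_zero (W : ℝ[X]) {a x b : ℝ} (hax : a < x)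
    (hxb : x < b) (ha : W.eval a = 0) (hx : W.eval x = 0) (hb : W.eval b = 0) :
    ∃ ξ ∈ Ioo a b, (derivative^[2] W).eval ξ = 0 := by
  have rolle : ∀ (Q : ℝ[X]) {c d : ℝ}, c < d → Q.eval c = Q.eval d →
      ∃ ζ ∈ Ioo c d, (derivative Q).eval ζ = 0 := fun Q c d hcd h => by
    obtain ⟨ζ, hζ, h0⟩ := exists_deriv_eq_zero hcd Q.continuousOn h
    exact ⟨ζ, hζ, by rwa [← Polynomial.deriv]⟩
  obtain ⟨η₁, hη₁, h₁⟩ := rolle W hax (ha.trans hx.symm)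
  obtain ⟨η₂, hη₂, h₂⟩ := rolle W hxb (hx.trans hb.symm)
  obtain ⟨ξ, hξ, h⟩ := rolle (derivative W) (hη₁.2.trans hη₂.1) (h₁.trans h₂.symm)
  exact ⟨ξ, ⟨hη₁.1.trans hξ.1, hξ.2.trans hη₂.2⟩, h⟩

theorem exists_eval_eq_secant_sub (P : ℝ[X]) {a x b : ℝ} (hax : a < x) (hxb : x < b) :
    ∃ ξ ∈ Ioo a b, P.eval x = ((b - x) * P.eval a + (x - a) * P.eval b) / (b - a)
      - (derivative^[2] P).eval ξ / 2 * ((x - a) * (b - x)) := by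
  set L := ((b - x) * P.eval a + (x - a) * P.eval b) / (b - a)
  set c := 2 * (P.eval x - L) / ((x - a) * (b - x))
  set W := P - C (P.eval a) - C ((P.eval b - P.eval a) / (b - a)) * (X - C a)
    + C (c / 2) * ((X - C a) * (X - C b))
  have hba : b - a ≠ 0 := by linarith
  have hxa : x - a ≠ 0 := by linarith
  have hbx : b - x ≠ 0 := by linarith
  have hW : derivative^[2] W = derivative^[2] P + C c := by
    simp only [W, Function.iterate_succ, Function.comp_apply, Function.iterate_zero, id,
      derivative_add, derivative_sub, derivative_mul, derivative_C, derivative_X, derivative_one,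
      derivative_zero]
    rw [show C c = C (c / 2) * 2 by rw [← map_ofNat C 2, ← C_mul, div_mul_cancel₀ c two_ne_zero]]
    ring
  obtain ⟨ξ, hξ, h⟩ := exists_eval_iterate_derivative_two_eq_zero W hax hxb
    (by simp [W]) (by simp [W, c, L]; field_simp; ring) (by simp [W]; field_simp; ring)
  refine ⟨ξ, hξ, ?_⟩
  rw [hW, eval_add, eval_C] at h
  simp only [c] at h
  field_simp at h ⊢
  linarith

theorem abs_eval_le_of_abs_eval_endpoints_le (P : ℝ[X]) {a x b S K : ℝ} (hax : a < x) (hxb : x < b)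
    (ha : |P.eval a| ≤ S) (hb : |P.eval b| ≤ S)
    (hK : ∀ ξ ∈ Ioo a b, |(derivative^[2] P).eval ξ| ≤ K) :
    |P.eval x| ≤ S + K * (b - a) ^ 2 / 8 := by
  obtain ⟨ξ, hξ, hx⟩ := P.exists_eval_eq_secant_sub hax hxb
  have hsecant : |((b - x) * P.eval a + (x - a) * P.eval b) / (b - a)| ≤ S := by
    rw [abs_div, abs_of_pos (by linarith : 0 < b - a), div_le_iff₀ (by linarith)]
    calc _ ≤ (b - x) * |P.eval a| + (x - a) * |P.eval b| := by
          refine (abs_add_le _ _).trans_eq ?_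
          rw [abs_mul, abs_mul, abs_of_pos (by linarith : 0 < b - x),
            abs_of_pos (by linarith : 0 < x - a)]
      _ ≤ (b - x) * S + (x - a) * S := by gcongr
      _ = S * (b - a) := by ring
  have hprod : 0 < (x - a) * (b - x) := mul_pos (by linarith) (by linarith)
  calc |P.eval x| ≤ S + |(derivative^[2] P).eval ξ| / 2 * ((x - a) * (b - x)) := by
        rw [hx]
        refine (abs_sub _ _).trans (add_le_add hsecant (le_of_eq ?_))
        rw [abs_mul, abs_div, abs_two, abs_of_pos hprod]
    _ ≤ S + K * (b - a) ^ 2 / 8 := by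
        nlinarith [hK ξ hξ, sq_nonneg (x - a - (b - x)), abs_nonneg ((derivative^[2] P).eval ξ)]

theorem abs_eval_le_of_abs_eval_one_div_nat_le {P : ℝ[X]} {D : ℕ} (hD : 1 ≤ D)
    (hdeg : P.natDegree ≤ D) {S : ℝ} (hbound : ∀ n : ℕ, D ^ 2 ≤ n → |P.eval (1 / (n : ℝ))| ≤ S) :
    ∀ x ∈ Icc (0 : ℝ) (1 / (D : ℝ) ^ 2), |P.eval x| ≤ 2 * S := by
  have hD' : (1 : ℝ) ≤ D := by exact_mod_cast hD
  obtain ⟨x₀, hx₀, hmax⟩ := (isCompact_Icc (a := (0 : ℝ)) (b := 1 / (D : ℝ) ^ 2)).exists_isMaxOn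
    (nonempty_Icc.mpr (by positivity))
    (continuous_abs.comp P.continuous).continuousOn
  set M := |P.eval x₀|
  have hM : ∀ y ∈ Icc (0 : ℝ) (1 / (D : ℝ) ^ 2), |P.eval y| ≤ M := fun y hy => hmax hy
  suffices M ≤ S + M / 6 from fun x hx => (hM x hx).trans (by linarith [abs_nonneg (P.eval x₀)])
  obtain hx₀0 | hx₀pos := hx₀.1.eq_or_lt
  · have h0 : |P.eval 0| ≤ S := le_of_tendsto
      ((P.continuous.tendsto 0).comp tendsto_one_div_atTop_nhds_zero_nat).abs
      (eventually_atTop.mpr ⟨D ^ 2, hbound⟩)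
    rw [hx₀0] at h0
    linarith [abs_nonneg (P.eval x₀)]
  set n := ⌊1 / x₀⌋₊
  have hn : D ^ 2 ≤ n := Nat.le_floor (by
    push_cast
    rw [le_one_div (by positivity) hx₀pos]
    exact hx₀.2)
  have hn' : ((D : ℝ) ^ 2) ≤ n := by exact_mod_cast hn
  have hnpos : (0 : ℝ) < n := by nlinarith
  have hlt : 1 / ((n : ℝ) + 1) < x₀ := by
    rw [div_lt_iff₀ (by positivity), ← div_lt_iff₀' hx₀pos]
    exact Nat.lt_floor_add_one _
  have hle : x₀ ≤ 1 / (n : ℝ) := (le_one_div hx₀pos hnpos).mpr (Nat.floor_le (by positivity))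
  obtain heq | hlt' := hle.eq_or_lt
  · have := hbound n hn
    rw [← heq] at this
    linarith [abs_nonneg (P.eval x₀)]
  have hK : ∀ ξ ∈ Ioo (1 / ((n : ℝ) + 1)) (1 / n),
      |(derivative^[2] P).eval ξ| ≤ (2 * ((n : ℝ) + 1)) ^ 2 * ((D : ℝ) ^ 4 / 3) * M := by
    intro ξ hξ
    have hwin : Icc (ξ - 1 / ((n : ℝ) + 1)) ξ ⊆ Icc 0 (1 / (D : ℝ) ^ 2) :=
      Icc_subset_Icc (by linarith [hξ.1])
        (hξ.2.le.trans (one_div_le_one_div_of_le (by positivity) hn'))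
    have h := abs_eval_iterate_derivative_endpoint_le (k := 2) hdeg (sub_lt_self ξ (by positivity))
      (fun y hy => hM y (hwin hy)) (Or.inr rfl)
    have h3 : ∏ j ∈ Finset.Icc (1 : ℕ) 2, (2 * (j : ℝ) - 1) = 3 := by
      simp [Finset.prod_Icc_succ_top]
      norm_num
    rwa [sub_sub_cancel, div_div_eq_mul_div, div_one, h3] at h
  refine (abs_eval_le_of_abs_eval_endpoints_le P hlt hlt'
    (by simpa using hbound (n + 1) (by omega)) (hbound n hn) hK).trans ?_
  have hM0 : 0 ≤ M := abs_nonneg _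
  have hD4 : (D : ℝ) ^ 4 / (n : ℝ) ^ 2 ≤ 1 := (div_le_one (by positivity)).mpr (by nlinarith)
  calc _ = S + (D : ℝ) ^ 4 / (n : ℝ) ^ 2 * M / 6 := by
        field_simp
        ring
    _ ≤ S + 1 * M / 6 := by gcongr
    _ = S + M / 6 := by ring

theorem iteratedDeriv_eval {𝕜 : Type*} [NontriviallyNormedField 𝕜] (p : 𝕜[X]) (k : ℕ) :
    iteratedDeriv k (fun x => p.eval x) = fun x => (derivative^[k] p).eval x := by
  induction k with
  | zero => simp
  | succ k ih =>
    ext x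
    rw [iteratedDeriv_succ, ih, Function.iterate_succ_apply', Polynomial.deriv]

end Polynomial

theorem stmt2_general (P : Polynomial ℝ) (D k : ℕ) (hD : 1 ≤ D) (hdeg : P.natDegree ≤ D) (S : ℝ)
    (hbound : ∀ n : ℕ, D ^ 2 ≤ n → |P.eval (1 / (n : ℝ))| ≤ S) :
    ∀ t ∈ Set.Icc (0 : ℝ) (1 / (2 * (D : ℝ) ^ 2)),
      |iteratedDeriv k (fun s => P.eval s) t| ≤
        (2 ^ (2 * k + 1) * (D : ℝ) ^ (4 * k) / ∏ j ∈ Finset.Icc 1 k, (2 * (j : ℝ) - 1)) * S := by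
  intro t ht
  have hD' : (0 : ℝ) < D := by exact_mod_cast hD
  have hwin : Icc t (t + 1 / (2 * (D : ℝ) ^ 2)) ⊆ Icc 0 (1 / (D : ℝ) ^ 2) := by
    have : 1 / (2 * (D : ℝ) ^ 2) + 1 / (2 * (D : ℝ) ^ 2) = 1 / (D : ℝ) ^ 2 := by
      field_simp
      ring
    exact Icc_subset_Icc ht.1 (by linarith [ht.2])
  have hsup := abs_eval_le_of_abs_eval_one_div_nat_le hD hdeg hbound
  have hwindow := abs_eval_iterate_derivative_endpoint_le (k := k) hdeg
    (lt_add_of_pos_right t (by positivity)) (fun y hy => hsup y (hwin hy)) (Or.inl rfl)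
  rw [iteratedDeriv_eval]
  refine hwindow.trans_eq ?_
  rw [add_sub_cancel_left,
    show (2 : ℝ) ^ (2 * k + 1) = 4 ^ k * 2 by rw [pow_succ, pow_mul]; norm_num]
  field_simp
  ring

/-- Markov-brothers type bound: if `P` has degree at most `D ≥ 1`, `1 ≤ k ≤ D`, and
`|P(1/n)| ≤ S` for all integers `n ≥ D²`, then for `t ∈ [0, 1/(2D²)]`,
`|P^{(k)}(t)| ≤ (2^(2k+1) D^(4k) / (2k-1)!!) * S`. -/
theorem stmt2 (P : Polynomial ℝ) (D k : ℕ) (hD : 1 ≤ D) (hdeg : P.natDegree ≤ D)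
    (hk1 : 1 ≤ k) (hkD : k ≤ D) (S : ℝ) (hS : 0 ≤ S)
    (hbound : ∀ n : ℕ, D ^ 2 ≤ n → |P.eval (1 / (n : ℝ))| ≤ S) :
    ∀ t ∈ Set.Icc (0 : ℝ) (1 / (2 * (D : ℝ) ^ 2)),
      |iteratedDeriv k (fun s => P.eval s) t| ≤
        (2 ^ (2 * k + 1) * (D : ℝ) ^ (4 * k) / ∏ j ∈ Finset.Icc 1 k, (2 * (j : ℝ) - 1)) * S :=
  stmt2_general P D k hD hdeg S hbound
end

section
/- For every integer L ≥ 1 and every t ∈ [0, 1/(2L²)], one has 1/2 ≤ g_L(t) ≤ 1. -/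
/-!
Every factor `(1 - c²t²)^⌊L/c⌋` lies in `[0, 1]`, which gives the upper bound. For the lower
bound, Bernoulli's inequality and the Weierstrass product inequality give
`g_L(t) ≥ 1 - t² ∑_c ⌊L/c⌋ c²`, and `∑_c ⌊L/c⌋ c² ≤ ∑_c L c ≤ L³`, while `L³ t² ≤ (L² t)² ≤ 1/4`.
-/

/-- The polynomial function `g_L(t) = ∏_{c=1}^{L} (1 - c² t²)^⌊L/c⌋`. -/
noncomputable def gL (L : ℕ) (t : ℝ) : ℝ :=
  ∏ c ∈ Finset.Icc 1 L, (1 - (c : ℝ) ^ 2 * t ^ 2) ^ (L / c)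

open Finset

section WeierstrassInequality

variable {ι R : Type*} [LinearOrder ι] [CommRing R] [LinearOrder R] [IsStrictOrderedRing R]

theorem Finset.one_sub_sum_le_prod_one_sub (s : Finset ι) (f : ι → R)
    (h0 : ∀ i ∈ s, 0 ≤ f i) (h1 : ∀ i ∈ s, f i ≤ 1) :
    1 - ∑ i ∈ s, f i ≤ ∏ i ∈ s, (1 - f i) := by
  rw [prod_one_sub_ordered]
  gcongr with i hi
  refine mul_le_of_le_one_right (h0 i hi) (prod_le_one (fun j hj => ?_) fun j hj => ?_)
  all_goals
    have hj := (mem_filter.1 hj).1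
    linarith [h0 j hj, h1 j hj]

theorem Finset.one_sub_sum_mul_le_prod_one_sub_pow (s : Finset ι) (x : ι → R) (n : ι → ℕ)
    (h0 : ∀ i ∈ s, 0 ≤ x i) (h1 : ∀ i ∈ s, x i ≤ 1) :
    1 - ∑ i ∈ s, (n i : R) * x i ≤ ∏ i ∈ s, (1 - x i) ^ n i := by
  have hpow0 : ∀ i ∈ s, 0 ≤ (1 - x i) ^ n i := fun i hi => pow_nonneg (by linarith [h1 i hi]) _
  have hpow1 : ∀ i ∈ s, (1 - x i) ^ n i ≤ 1 := fun i hi =>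
    pow_le_one₀ (by linarith [h1 i hi]) (by linarith [h0 i hi])
  have bernoulli : ∀ i ∈ s, 1 - (1 - x i) ^ n i ≤ n i * x i := fun i hi => by
    have := one_add_mul_le_pow (a := -x i) (by linarith [h1 i hi]) (n i)
    rw [← sub_eq_add_neg] at this
    linarith
  calc 1 - ∑ i ∈ s, (n i : R) * x i ≤ 1 - ∑ i ∈ s, (1 - (1 - x i) ^ n i) := by
        gcongr with i hi
        exact bernoulli i hi
    _ ≤ ∏ i ∈ s, (1 - (1 - (1 - x i) ^ n i)) :=
        one_sub_sum_le_prod_one_sub s _ (fun i hi => sub_nonneg.2 (hpow1 i hi))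
          fun i hi => by linarith [hpow0 i hi]
    _ = ∏ i ∈ s, (1 - x i) ^ n i := by simp only [sub_sub_cancel]

end WeierstrassInequality

theorem Nat.sum_Icc_div_mul_sq_le_cube (L : ℕ) : ∑ c ∈ Icc 1 L, L / c * c ^ 2 ≤ L ^ 3 :=
  calc ∑ c ∈ Icc 1 L, L / c * c ^ 2 ≤ ∑ _c ∈ Icc 1 L, L * L := sum_le_sum fun c hc => by
        rw [sq, ← mul_assoc]
        exact Nat.mul_le_mul (Nat.div_mul_le_self L c) (mem_Icc.1 hc).2
    _ = L ^ 3 := by simp only [sum_const, Nat.card_Icc, add_tsub_cancel_right, smul_eq_mul]; ring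

theorem cube_mul_sq_le_quarter {L : ℕ} {t : ℝ}
    (ht : t ∈ Set.Icc (0 : ℝ) (1 / (2 * (L : ℝ) ^ 2))) : (L : ℝ) ^ 3 * t ^ 2 ≤ 1 / 4 := by
  obtain ⟨ht0, ht1⟩ := ht
  rcases Nat.eq_zero_or_pos L with rfl | hLpos
  · norm_num
  have hL : (1 : ℝ) ≤ L := by exact_mod_cast hLpos
  have hLt : (L : ℝ) ^ 2 * t ≤ 1 / 2 :=
    calc (L : ℝ) ^ 2 * t ≤ (L : ℝ) ^ 2 * (1 / (2 * (L : ℝ) ^ 2)) := by gcongr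
      _ = 1 / 2 := by field_simp
  calc (L : ℝ) ^ 3 * t ^ 2 ≤ L * ((L : ℝ) ^ 3 * t ^ 2) := le_mul_of_one_le_left (by positivity) hL
    _ = ((L : ℝ) ^ 2 * t) ^ 2 := by ring
    _ ≤ 1 / 4 := by nlinarith [mul_nonneg (sq_nonneg (L : ℝ)) ht0]

theorem sum_div_mul_sq_mul_sq_le_quarter {L : ℕ} {t : ℝ}
    (ht : t ∈ Set.Icc (0 : ℝ) (1 / (2 * (L : ℝ) ^ 2))) :
    ∑ c ∈ Icc 1 L, ((L / c : ℕ) : ℝ) * ((c : ℝ) ^ 2 * t ^ 2) ≤ 1 / 4 := by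
  have hcube : ((∑ c ∈ Icc 1 L, L / c * c ^ 2 : ℕ) : ℝ) ≤ (L : ℝ) ^ 3 := by
    exact_mod_cast Nat.sum_Icc_div_mul_sq_le_cube L
  calc ∑ c ∈ Icc 1 L, ((L / c : ℕ) : ℝ) * ((c : ℝ) ^ 2 * t ^ 2)
      = ((∑ c ∈ Icc 1 L, L / c * c ^ 2 : ℕ) : ℝ) * t ^ 2 := by
        push_cast; rw [sum_mul]; exact sum_congr rfl fun c _ => by ring
    _ ≤ (L : ℝ) ^ 3 * t ^ 2 := by gcongr
    _ ≤ 1 / 4 := cube_mul_sq_le_quarter ht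

theorem stmt5_general (L : ℕ) :
    ∀ t ∈ Set.Icc (0 : ℝ) (1 / (2 * (L : ℝ) ^ 2)),
      1 / 2 ≤ gL L t ∧ gL L t ≤ 1 := by
  intro t ht
  have hx0 : ∀ c ∈ Icc 1 L, 0 ≤ (c : ℝ) ^ 2 * t ^ 2 := fun c _ => by positivity
  have hx1 : ∀ c ∈ Icc 1 L, (c : ℝ) ^ 2 * t ^ 2 ≤ 1 := fun c hc => by
    obtain ⟨hc1, hcL⟩ := mem_Icc.1 hc
    have hcL3 : (c : ℝ) ^ 2 ≤ (L : ℝ) ^ 3 := by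
      exact_mod_cast (Nat.pow_le_pow_left hcL 2).trans
        (Nat.pow_le_pow_right (hc1.trans hcL) (by norm_num))
    nlinarith [cube_mul_sq_le_quarter ht, sq_nonneg t]
  have hsum := sum_div_mul_sq_mul_sq_le_quarter ht
  refine ⟨?_, prod_le_one (fun c hc => pow_nonneg (by linarith [hx1 c hc]) _)
    fun c hc => pow_le_one₀ (by linarith [hx1 c hc]) (by linarith [hx0 c hc])⟩
  have hweierstrass := one_sub_sum_mul_le_prod_one_sub_pow (Icc 1 L) (fun c => (c : ℝ) ^ 2 * t ^ 2)
    (fun c => L / c) hx0 hx1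
  unfold gL
  linarith

/-- For every integer `L ≥ 1` and every `t ∈ [0, 1/(2L²)]`, `1/2 ≤ g_L(t) ≤ 1`. -/
theorem stmt5 (L : ℕ) (hL : 1 ≤ L) :
    ∀ t ∈ Set.Icc (0 : ℝ) (1 / (2 * (L : ℝ) ^ 2)),
      1 / 2 ≤ gL L t ∧ gL L t ≤ 1 :=
  stmt5_general L
end

section
/- Let μ be a reasonable probability measure on F_r. Then there exist a constant C > 0 and a natural number a (depending only on μ) such that for every n ∈ ℕ, every h ∈ F_r, and every h' ∈ F_r lying on the geodesic segment from the identity to h (i.e. ‖h‖ = ‖h'‖ + ‖h'⁻¹·h‖), one has (μ^n) h ≤ C · Σ_{k=0}^{n+a} (μ^k) h' · (μ^{n+a−k}) (h'⁻¹·h). -/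
/-- `μ` is a reasonable probability measure on the free group: symmetric, finitely
supported (automatic in the monoid algebra), with nonnegative values summing to `1`,
charging the identity, and with support generating the group. -/
def Reasonable {r : ℕ} (μ : MonoidAlgebra ℝ (FreeGroup (Fin r))) : Prop :=
  (∀ g : FreeGroup (Fin r), 0 ≤ μ.coeff g) ∧
  (∑ g ∈ μ.coeff.support, μ.coeff g = 1) ∧
  (∀ g : FreeGroup (Fin r), μ.coeff g = μ.coeff g⁻¹) ∧
  0 < μ.coeff (1 : FreeGroup (Fin r)) ∧
  Subgroup.closure (↑μ.coeff.support : Set (FreeGroup (Fin r))) = ⊤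

/-!
A walk from `1` to `h` must enter the cone of reduced words beginning with `h'`. In the Cayley
tree a step `s` that enters this cone from outside lands at `h' g` with `‖g‖ ≤ ‖s‖ ≤ L`, `L` the
largest step length, so splitting by the time `k` and point `h' g` of first entrance gives
`μⁿ(h) ≤ ∑ₖ ∑_{‖g‖ ≤ L} μᵏ(h' g) μⁿ⁻ᵏ(g⁻¹ h'⁻¹ h)`. Since `μ(1) > 0` and the support generates,
some power `μᵃ` is at least `ε > 0` on the whole ball of radius `L`; hence
`μᵏ(h' g) ≤ ε⁻¹ μᵏ⁺ᵃ(h')` and `μⁿ⁻ᵏ(g⁻¹ h'⁻¹ h) ≤ ε⁻¹ μᵃ⁺ⁿ⁻ᵏ(h'⁻¹ h)`, and summing over the ball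
gives the claim with `C = #ball / ε²` and shift `2a`.
-/

open Finset

theorem List.exists_eq_append_append_of_head?_ne {β : Type*} :
    ∀ p q : List β, ∃ u v w, p = u ++ v ∧ q = u ++ w ∧ ∀ a ∈ v.head?, ∀ b ∈ w.head?, a ≠ b
  | x :: p, y :: q => by
    by_cases hxy : x = y
    · obtain ⟨u, v, w, rfl, rfl, hne⟩ := exists_eq_append_append_of_head?_ne p q
      exact ⟨x :: u, v, w, rfl, by rw [hxy]; rfl, hne⟩
    · exact ⟨[], x :: p, y :: q, rfl, rfl, by simpa⟩
  | [], q => ⟨[], [], q, rfl, rfl, by simp⟩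
  | p, [] => ⟨[], p, [], by simp, rfl, by simp⟩

namespace FreeGroup

variable {α : Type*} [DecidableEq α]

theorem IsReduced.invRev {L : List (α × Bool)} (hL : IsReduced L) : IsReduced (invRev L) := by
  rw [← hL.reduce_eq, ← toWord_mk, ← toWord_inv]
  exact isReduced_toWord

theorem exists_toWord_inv_mul (x y : FreeGroup α) :
    ∃ u v w, x.toWord = u ++ v ∧ y.toWord = u ++ w ∧ (x⁻¹ * y).toWord = invRev v ++ w := by
  obtain ⟨u, v, w, hx, hy, hne⟩ := List.exists_eq_append_append_of_head?_ne x.toWord y.toWord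
  refine ⟨u, v, w, hx, hy, ?_⟩
  have hv : IsReduced v := isReduced_toWord.infix (hx ▸ List.suffix_append u v).isInfix
  have hw : IsReduced w := isReduced_toWord.infix (hy ▸ List.suffix_append u w).isInfix
  have hxy : x⁻¹ * y = mk (invRev v ++ w) := by
    rw [← mk_toWord (x := x), ← mk_toWord (x := y), hx, hy, ← mul_mk, ← mul_mk, ← mul_mk,
      ← inv_mk]
    group
  rw [hxy, toWord_mk, IsReduced.reduce_eq (List.isChain_append.2 ⟨hv.invRev, hw, ?_⟩)]
  -- the last letter of `invRev v` inverts the first letter of `v`, which is not that of `w`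
  intro a ha b hb hab
  simp only [FreeGroup.invRev, List.getLast?_reverse, List.head?_map, Option.mem_def,
    Option.map_eq_some_iff] at ha
  obtain ⟨c, hc, rfl⟩ := ha
  have := hne c hc b hb
  grind

theorem toWord_inv_mul_of_toWord_eq_append {x y : FreeGroup α} {w : List (α × Bool)}
    (h : x.toWord = y.toWord ++ w) : (y⁻¹ * x).toWord = w := by
  have hw : IsReduced w := isReduced_toWord.infix (h ▸ List.suffix_append _ w).isInfix
  rw [← mk_toWord (x := x), h, ← mul_mk, mk_toWord, inv_mul_cancel_left, toWord_mk, hw.reduce_eq]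

theorem norm_eq_norm_add_norm_inv_mul_iff {x y : FreeGroup α} :
    norm x = norm y + norm (y⁻¹ * x) ↔ y.toWord <+: x.toWord := by
  refine ⟨fun hgeo => ?_, fun ⟨w, hw⟩ => ?_⟩
  · obtain ⟨u, v, w, hy, hx, hyx⟩ := exists_toWord_inv_mul y x
    simp only [norm, hy, hx, hyx, List.length_append, invRev_length] at hgeo
    obtain rfl : v = [] := List.length_eq_zero_iff.1 (by omega)
    exact ⟨w, by rw [hy, hx, List.append_nil]⟩
  · simp [norm, ← hw, toWord_inv_mul_of_toWord_eq_append hw.symm]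

/-- In the Cayley tree, the geodesic from `x` to `y` passes through `z`. -/
theorem norm_inv_mul_le_of_prefix_of_not_prefix {x y z : FreeGroup α}
    (hy : z.toWord <+: y.toWord) (hx : ¬ z.toWord <+: x.toWord) :
    norm (z⁻¹ * y) ≤ norm (x⁻¹ * y) := by
  obtain ⟨u, v, w, hxw, hyw, hxy⟩ := exists_toWord_inv_mul x y
  have hu : u.length < z.toWord.length := by
    by_contra! hle
    exact hx ((List.prefix_of_prefix_length_le hy ⟨w, hyw.symm⟩ hle).trans ⟨v, hxw.symm⟩)
  have hgeo := norm_eq_norm_add_norm_inv_mul_iff.2 hy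
  simp only [norm, hyw, hxy, List.length_append, invRev_length] at hgeo ⊢
  omega

theorem finite_setOf_norm_le [Finite α] (L : ℕ) : {x : FreeGroup α | norm x ≤ L}.Finite :=
  (List.finite_length_le _ L).preimage toWord_injective.injOn

noncomputable def closedBall [Finite α] (L : ℕ) : Finset (FreeGroup α) :=
  (finite_setOf_norm_le L).toFinset

@[simp]
theorem mem_closedBall [Finite α] {L : ℕ} {x : FreeGroup α} :
    x ∈ closedBall L ↔ norm x ≤ L :=
  Set.Finite.mem_toFinset _

end FreeGroup

namespace MonoidAlgebra

variable {G : Type*} [Group G] {μ ν : MonoidAlgebra ℝ G}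

theorem coeff_mul_nonneg (hμ : ∀ g, 0 ≤ μ.coeff g) (hν : ∀ g, 0 ≤ ν.coeff g) (g : G) :
    0 ≤ (μ * ν).coeff g := by
  rw [coeff_mul_apply_left]
  exact Finsupp.sum_nonneg' fun a => mul_nonneg (hμ a) (hν _)

theorem coeff_mul_coeff_le_coeff_mul (hμ : ∀ g, 0 ≤ μ.coeff g) (hν : ∀ g, 0 ≤ ν.coeff g)
    (g w : G) : μ.coeff g * ν.coeff (g⁻¹ * w) ≤ (μ * ν).coeff w := by
  by_cases hg : g ∈ μ.coeff.support
  · rw [coeff_mul_apply_left]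
    exact Finset.single_le_sum (f := fun a => μ.coeff a * ν.coeff (a⁻¹ * w))
      (fun a _ => mul_nonneg (hμ a) (hν _)) hg
  · rw [Finsupp.notMem_support_iff.1 hg, zero_mul]
    exact coeff_mul_nonneg hμ hν w

theorem coeff_pow_nonneg (hμ : ∀ g, 0 ≤ μ.coeff g) (n : ℕ) (g : G) :
    0 ≤ (μ ^ n).coeff g := by
  induction n generalizing g with
  | zero =>
    rw [pow_zero, one_def, coeff_single]
    exact Finsupp.single_nonneg.2 zero_le_one g
  | succ n ih => rw [pow_succ]; exact coeff_mul_nonneg ih hμ g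

theorem coeff_pow_mul_coeff_pow_le (hμ : ∀ g, 0 ≤ μ.coeff g) (m n : ℕ) (g w : G) :
    (μ ^ m).coeff g * (μ ^ n).coeff (g⁻¹ * w) ≤ (μ ^ (m + n)).coeff w := by
  rw [pow_add]
  exact coeff_mul_coeff_le_coeff_mul (coeff_pow_nonneg hμ m) (coeff_pow_nonneg hμ n) g w

theorem coeff_pow_one_pos (hμ : ∀ g, 0 ≤ μ.coeff g) (h1 : 0 < μ.coeff 1) (n : ℕ) :
    0 < (μ ^ n).coeff 1 := by
  induction n with
  | zero => simp
  | succ n ih =>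
    exact (mul_pos ih h1).trans_le (by simpa using coeff_pow_mul_coeff_pow_le hμ n 1 1 1)

theorem exists_coeff_pow_pos (hμ : ∀ g, 0 ≤ μ.coeff g) (hsymm : ∀ g, μ.coeff g = μ.coeff g⁻¹)
    (hgen : Subgroup.closure (μ.coeff.support : Set G) = ⊤) (g : G) :
    ∃ n, 0 < (μ ^ n).coeff g := by
  have hinv : (μ.coeff.support : Set G)⁻¹ = μ.coeff.support := by
    ext s
    simp [hsymm s⁻¹]
  have hg : g ∈ Submonoid.closure (μ.coeff.support : Set G) := by
    have := Subgroup.closure_toSubmonoid (μ.coeff.support : Set G)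
    rw [hgen, hinv, Set.union_self] at this
    rw [← this]
    trivial
  induction hg using Submonoid.closure_induction with
  | mem s hs => exact ⟨1, by simpa using (hμ s).lt_of_ne' (Finsupp.mem_support_iff.1 hs)⟩
  | one => exact ⟨0, by simp⟩
  | mul x y _ _ hx hy =>
    obtain ⟨m, hm⟩ := hx
    obtain ⟨n, hn⟩ := hy
    refine ⟨m + n, (mul_pos hm ?_).trans_le (coeff_pow_mul_coeff_pow_le hμ m n x (x * y))⟩
    rwa [inv_mul_cancel_left]

theorem eventually_coeff_pow_pos (hμ : ∀ g, 0 ≤ μ.coeff g) (h1 : 0 < μ.coeff 1)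
    (hsymm : ∀ g, μ.coeff g = μ.coeff g⁻¹)
    (hgen : Subgroup.closure (μ.coeff.support : Set G) = ⊤) (g : G) :
    ∀ᶠ n in Filter.atTop, 0 < (μ ^ n).coeff g := by
  obtain ⟨m, hm⟩ := exists_coeff_pow_pos hμ hsymm hgen g
  filter_upwards [Filter.eventually_ge_atTop m] with n hn
  obtain ⟨k, rfl⟩ := Nat.exists_eq_add_of_le' hn
  exact (mul_pos (coeff_pow_one_pos hμ h1 k) hm).trans_le
    (by simpa using coeff_pow_mul_coeff_pow_le hμ k m 1 g)

theorem exists_pos_le_coeff_pow (hμ : ∀ g, 0 ≤ μ.coeff g) (h1 : 0 < μ.coeff 1)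
    (hsymm : ∀ g, μ.coeff g = μ.coeff g⁻¹)
    (hgen : Subgroup.closure (μ.coeff.support : Set G) = ⊤) (s : Finset G) :
    ∃ a, ∃ ε > 0, ∀ g ∈ s, ε ≤ (μ ^ a).coeff g := by
  obtain ⟨a, ha⟩ := ((Filter.eventually_all_finset s).2 fun g _ =>
    eventually_coeff_pow_pos hμ h1 hsymm hgen g).exists
  rcases s.eq_empty_or_nonempty with rfl | hs
  · exact ⟨a, 1, one_pos, by simp⟩
  · exact ⟨a, s.inf' hs _, (lt_inf'_iff hs).2 ha, fun g hg => inf'_le _ hg⟩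

/-- If every path from `x` to `h` has to pass through `M`, then `entranceSum μ M h n x` bounds
`μⁿ(x⁻¹ h)`: `k` is the time and `z` the point of first arrival in `M`. -/
noncomputable def entranceSum (μ : MonoidAlgebra ℝ G) (M : Finset G) (h : G) (n : ℕ) (x : G) :
    ℝ :=
  ∑ k ∈ range (n + 1), ∑ z ∈ M, (μ ^ k).coeff (x⁻¹ * z) * (μ ^ (n - k)).coeff (z⁻¹ * h)

variable {M : Finset G} {h : G}

theorem entranceSum_nonneg (hμ : ∀ g, 0 ≤ μ.coeff g) (n : ℕ) (x : G) :
    0 ≤ entranceSum μ M h n x :=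
  sum_nonneg fun _ _ => sum_nonneg fun _ _ =>
    mul_nonneg (coeff_pow_nonneg hμ _ _) (coeff_pow_nonneg hμ _ _)

theorem coeff_pow_le_entranceSum_of_mem (hμ : ∀ g, 0 ≤ μ.coeff g) {x : G} (hx : x ∈ M)
    (n : ℕ) : (μ ^ n).coeff (x⁻¹ * h) ≤ entranceSum μ M h n x := by
  have hterm : ∀ k z, 0 ≤ (μ ^ k).coeff (x⁻¹ * z) * (μ ^ (n - k)).coeff (z⁻¹ * h) :=
    fun _ _ => mul_nonneg (coeff_pow_nonneg hμ _ _) (coeff_pow_nonneg hμ _ _)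
  calc (μ ^ n).coeff (x⁻¹ * h)
      = (μ ^ 0).coeff (x⁻¹ * x) * (μ ^ (n - 0)).coeff (x⁻¹ * h) := by simp
    _ ≤ ∑ z ∈ M, (μ ^ 0).coeff (x⁻¹ * z) * (μ ^ (n - 0)).coeff (z⁻¹ * h) :=
        single_le_sum (fun z _ => hterm 0 z) hx
    _ ≤ entranceSum μ M h n x :=
        single_le_sum (f := fun k => ∑ z ∈ M, _) (fun k _ => sum_nonneg fun z _ => hterm k z)
          (mem_range.2 n.succ_pos)

theorem sum_coeff_mul_entranceSum_le (hμ : ∀ g, 0 ≤ μ.coeff g) (n : ℕ) (x : G) :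
    ∑ s ∈ μ.coeff.support, μ.coeff s * entranceSum μ M h n (x * s) ≤
      entranceSum μ M h (n + 1) x := by
  have hstep : ∀ k z, ∑ s ∈ μ.coeff.support, μ.coeff s * (μ ^ k).coeff ((x * s)⁻¹ * z) =
      (μ ^ (k + 1)).coeff (x⁻¹ * z) := fun k z => by
    rw [pow_succ', coeff_mul_apply_left, Finsupp.sum]
    simp only [mul_inv_rev, mul_assoc]
  calc ∑ s ∈ μ.coeff.support, μ.coeff s * entranceSum μ M h n (x * s)
      = ∑ k ∈ range (n + 1), ∑ z ∈ M,
          (μ ^ (k + 1)).coeff (x⁻¹ * z) * (μ ^ (n + 1 - (k + 1))).coeff (z⁻¹ * h) := by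
        simp only [entranceSum, mul_sum, ← hstep, sum_mul, Nat.add_sub_add_right, mul_assoc]
        rw [sum_comm]
        exact sum_congr rfl fun _ _ => sum_comm
    _ ≤ entranceSum μ M h (n + 1) x := by
        rw [entranceSum, sum_range_succ' _ (n + 1)]
        exact le_add_of_nonneg_right (sum_nonneg fun _ _ =>
          mul_nonneg (coeff_pow_nonneg hμ _ _) (coeff_pow_nonneg hμ _ _))

theorem coeff_pow_le_entranceSum (hμ : ∀ g, 0 ≤ μ.coeff g) {C : Set G} (hC : h ∈ C)
    (hM : ∀ x ∉ C, ∀ s ∈ μ.coeff.support, x * s ∈ C → x * s ∈ M) (n : ℕ) {x : G}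
    (hx : x ∉ C ∨ x ∈ M) : (μ ^ n).coeff (x⁻¹ * h) ≤ entranceSum μ M h n x := by
  induction n generalizing x with
  | zero =>
    rcases hx with hx | hx
    · have : x⁻¹ * h ≠ 1 := fun hxh => hx (inv_mul_eq_one.1 hxh ▸ hC)
      simpa [one_def, coeff_single, Finsupp.single_apply, Ne.symm this] using
        entranceSum_nonneg hμ 0 x
    · exact coeff_pow_le_entranceSum_of_mem hμ hx 0
  | succ n ih =>
    rcases hx with hx | hx
    · calc (μ ^ (n + 1)).coeff (x⁻¹ * h)
          = ∑ s ∈ μ.coeff.support, μ.coeff s * (μ ^ n).coeff ((x * s)⁻¹ * h) := by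
            rw [pow_succ', coeff_mul_apply_left, Finsupp.sum]
            simp only [mul_inv_rev, mul_assoc]
        _ ≤ ∑ s ∈ μ.coeff.support, μ.coeff s * entranceSum μ M h n (x * s) := by
            gcongr with s hs
            · exact hμ s
            · exact ih (by by_cases hs' : x * s ∈ C <;> simp [hs', hM x hx s hs])
        _ ≤ entranceSum μ M h (n + 1) x := sum_coeff_mul_entranceSum_le hμ n x
    · exact coeff_pow_le_entranceSum_of_mem hμ hx (n + 1)

theorem entranceSum_le (hμ : ∀ g, 0 ≤ μ.coeff g) {a : ℕ} {ε : ℝ} (hε : 0 < ε) {y : G}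
    (hM : ∀ z ∈ M, ε ≤ (μ ^ a).coeff (z⁻¹ * y) ∧ ε ≤ (μ ^ a).coeff (y⁻¹ * z))
    (n : ℕ) (x : G) :
    entranceSum μ M h n x ≤ #M / ε ^ 2 * ∑ k ∈ range (n + 2 * a + 1),
      (μ ^ k).coeff (x⁻¹ * y) * (μ ^ (n + 2 * a - k)).coeff (y⁻¹ * h) := by
  set f : ℕ → ℝ := fun k => (μ ^ k).coeff (x⁻¹ * y) * (μ ^ (n + 2 * a - k)).coeff (y⁻¹ * h)
  have hleft : ∀ k, ∀ z ∈ M,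
      (μ ^ k).coeff (x⁻¹ * z) ≤ ε⁻¹ * (μ ^ (k + a)).coeff (x⁻¹ * y) := by
    intro k z hz
    rw [le_inv_mul_iff₀ hε]
    calc ε * (μ ^ k).coeff (x⁻¹ * z)
        ≤ (μ ^ k).coeff (x⁻¹ * z) * (μ ^ a).coeff (z⁻¹ * y) := by
          rw [mul_comm]
          exact mul_le_mul_of_nonneg_left (hM z hz).1 (coeff_pow_nonneg hμ _ _)
      _ ≤ (μ ^ (k + a)).coeff (x⁻¹ * y) := by
          simpa [mul_assoc] using coeff_pow_mul_coeff_pow_le hμ k a (x⁻¹ * z) (x⁻¹ * y)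
  have hright : ∀ j, ∀ z ∈ M,
      (μ ^ j).coeff (z⁻¹ * h) ≤ ε⁻¹ * (μ ^ (a + j)).coeff (y⁻¹ * h) := by
    intro j z hz
    rw [le_inv_mul_iff₀ hε]
    calc ε * (μ ^ j).coeff (z⁻¹ * h)
        ≤ (μ ^ a).coeff (y⁻¹ * z) * (μ ^ j).coeff (z⁻¹ * h) :=
          mul_le_mul_of_nonneg_right (hM z hz).2 (coeff_pow_nonneg hμ _ _)
      _ ≤ (μ ^ (a + j)).coeff (y⁻¹ * h) := by
          simpa [mul_assoc] using coeff_pow_mul_coeff_pow_le hμ a j (y⁻¹ * z) (y⁻¹ * h)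
  calc entranceSum μ M h n x
      ≤ ∑ k ∈ range (n + 1), ∑ _z ∈ M, ε⁻¹ * ε⁻¹ * f (a + k) := by
        refine sum_le_sum fun k hk => sum_le_sum fun z hz => ?_
        have hnk : n + 2 * a - (a + k) = a + (n - k) := by have := mem_range.1 hk; omega
        calc (μ ^ k).coeff (x⁻¹ * z) * (μ ^ (n - k)).coeff (z⁻¹ * h)
            ≤ (ε⁻¹ * (μ ^ (k + a)).coeff (x⁻¹ * y)) *
                (ε⁻¹ * (μ ^ (a + (n - k))).coeff (y⁻¹ * h)) :=
              mul_le_mul (hleft k z hz) (hright _ z hz) (coeff_pow_nonneg hμ _ _)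
                (mul_nonneg (inv_nonneg.2 hε.le) (coeff_pow_nonneg hμ _ _))
          _ = ε⁻¹ * ε⁻¹ * f (a + k) := by simp only [f, hnk, add_comm k a]; ring
    _ = #M / ε ^ 2 * ∑ k ∈ Ico a (a + (n + 1)), f k := by
        rw [sum_Ico_eq_sum_range, Nat.add_sub_cancel_left, mul_sum]
        simp only [sum_const, nsmul_eq_mul]
        exact sum_congr rfl fun _ _ => by ring
    _ ≤ #M / ε ^ 2 * ∑ k ∈ range (n + 2 * a + 1), f k := by
        gcongr
        · exact fun k _ _ => mul_nonneg (coeff_pow_nonneg hμ _ _) (coeff_pow_nonneg hμ _ _)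
        · intro k hk; simp only [mem_Ico, mem_range] at hk ⊢; omega

end MonoidAlgebra

open MonoidAlgebra in
theorem FreeGroup.coeff_pow_le_entranceSum {α : Type*} [DecidableEq α] [Finite α]
    {μ : MonoidAlgebra ℝ (FreeGroup α)} (hμ : ∀ g, 0 ≤ μ.coeff g) {L : ℕ}
    (hL : ∀ s ∈ μ.coeff.support, norm s ≤ L) {h y : FreeGroup α} (hy : y.toWord <+: h.toWord)
    (n : ℕ) : (μ ^ n).coeff h ≤ entranceSum μ ((closedBall L).image (y * ·)) h n 1 := by
  have hM : ∀ x ∉ {x : FreeGroup α | y.toWord <+: x.toWord}, ∀ s ∈ μ.coeff.support,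
      y.toWord <+: (x * s).toWord → x * s ∈ (closedBall L).image (y * ·) := by
    intro x hx s hs hxs
    refine mem_image.2 ⟨y⁻¹ * (x * s), mem_closedBall.2 ?_, mul_inv_cancel_left y _⟩
    exact (norm_inv_mul_le_of_prefix_of_not_prefix hxs hx).trans (by simpa using hL s hs)
  have h1 : 1 ∉ {x : FreeGroup α | y.toWord <+: x.toWord} ∨
      1 ∈ (closedBall L).image (y * ·) := by
    by_cases hy1 : y = 1
    · exact .inr (mem_image.2 ⟨1, by simp, by simp [hy1]⟩)
    · exact .inl fun h1 => hy1 (toWord_eq_nil_iff.1 (List.prefix_nil.1 (by simpa using h1)))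
  simpa using MonoidAlgebra.coeff_pow_le_entranceSum hμ hy hM n h1

theorem stmt9_general (r : ℕ) (μ : MonoidAlgebra ℝ (FreeGroup (Fin r)))
    (hμ : Reasonable μ) :
    ∃ C : ℝ, 0 < C ∧ ∃ a : ℕ,
      ∀ (n : ℕ) (h h' : FreeGroup (Fin r)),
        FreeGroup.norm h = FreeGroup.norm h' + FreeGroup.norm (h'⁻¹ * h) →
        (μ ^ n).coeff h ≤
          C * ∑ k ∈ Finset.range (n + a + 1),
            (μ ^ k).coeff h' * (μ ^ (n + a - k)).coeff (h'⁻¹ * h) := by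
  obtain ⟨hnn, -, hsymm, h1, hgen⟩ := hμ
  set B := FreeGroup.closedBall (α := Fin r) (μ.coeff.support.sup FreeGroup.norm)
  obtain ⟨a, ε, hε, hεB⟩ := MonoidAlgebra.exists_pos_le_coeff_pow hnn h1 hsymm hgen B
  have hB : 0 < #B := card_pos.2 ⟨1, FreeGroup.mem_closedBall.2 (by simp)⟩
  refine ⟨#B / ε ^ 2, div_pos (Nat.cast_pos.2 hB) (pow_pos hε 2), 2 * a, fun n h y hgeo => ?_⟩
  have hM : ∀ z ∈ B.image (y * ·),
      ε ≤ (μ ^ a).coeff (z⁻¹ * y) ∧ ε ≤ (μ ^ a).coeff (y⁻¹ * z) := by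
    simp only [mem_image]
    rintro _ ⟨g, hg, rfl⟩
    refine ⟨hεB _ ?_, by simpa using hεB g hg⟩
    simpa [B, FreeGroup.norm_inv_eq] using hg
  calc (μ ^ n).coeff h ≤ MonoidAlgebra.entranceSum μ (B.image (y * ·)) h n 1 :=
        FreeGroup.coeff_pow_le_entranceSum hnn (fun s hs => le_sup hs)
          (FreeGroup.norm_eq_norm_add_norm_inv_mul_iff.1 hgeo) n
    _ ≤ _ := by
        have := MonoidAlgebra.entranceSum_le (h := h) hnn hε hM n 1
        rwa [card_image_of_injective _ (mul_right_injective y), inv_one, one_mul] at this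

/-- If `μ` is reasonable, there are `C > 0` and `a ∈ ℕ` such that for every `n`, every
`h` and every `h'` on the geodesic segment from the identity to `h`,
`(μ^n) h ≤ C ∑_{k=0}^{n+a} (μ^k) h' · (μ^{n+a-k}) (h'⁻¹ h)`. -/
theorem stmt9 (r : ℕ) (hr : 1 ≤ r) (μ : MonoidAlgebra ℝ (FreeGroup (Fin r)))
    (hμ : Reasonable μ) :
    ∃ C : ℝ, 0 < C ∧ ∃ a : ℕ,
      ∀ (n : ℕ) (h h' : FreeGroup (Fin r)),
        FreeGroup.norm h = FreeGroup.norm h' + FreeGroup.norm (h'⁻¹ * h) →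
        (μ ^ n).coeff h ≤
          C * ∑ k ∈ Finset.range (n + a + 1),
            (μ ^ k).coeff h' * (μ ^ (n + a - k)).coeff (h'⁻¹ * h) :=
  stmt9_general r μ hμ
end

section
/- Let A be a complex *-algebra and let u : A → ℂ be a linear map which is positive, in the sense that u(x* · x) is a nonnegative real number for every x ∈ A. Suppose there exists a positive integer i such that u(xⁱ) = 0 for every self-adjoint x ∈ A (i.e. every x with x* = x). Then u(x·y·z) = 0 for all x, y, z ∈ A. -/
/-- Powers in a not-necessarily-unital ring: `nupow x n = x^(n+1)`. -/
def nupow {A : Type*} [NonUnitalRing A] (x : A) : ℕ → A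
  | 0 => x
  | n + 1 => x * nupow x n

set_option linter.unusedSectionVars false

section aux

variable {A : Type*} [NonUnitalRing A] [Module ℂ A] [SMulCommClass ℂ A A]
    [IsScalarTower ℂ A A] [StarRing A] [StarModule ℂ A]

lemma nupow_zero (x : A) : nupow x 0 = x := rfl

lemma nupow_succ (x : A) (n : ℕ) : nupow x (n + 1) = x * nupow x n := rfl

lemma nupow_add (x : A) (m n : ℕ) : nupow x (m + n + 1) = nupow x m * nupow x n := by
  induction m with
  | zero =>
    have : 0 + n + 1 = n + 1 := by omega
    rw [this, nupow_succ, nupow_zero]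
  | succ m ih =>
    have : m + 1 + n + 1 = (m + n + 1) + 1 := by omega
    rw [this, nupow_succ, ih, nupow_succ, mul_assoc]

lemma nupow_comm (x : A) (n : ℕ) : nupow x n * x = x * nupow x n := by
  induction n with
  | zero => rfl
  | succ n ih => rw [nupow_succ, mul_assoc, ih, ← mul_assoc]

lemma star_nupow (x : A) (hx : star x = x) (n : ℕ) : star (nupow x n) = nupow x n := by
  induction n with
  | zero => exact hx
  | succ n ih => rw [nupow_succ, star_mul, ih, hx, nupow_comm]

lemma nupow_sq (x : A) (n : ℕ) : nupow (x * x) n = nupow x (2 * n + 1) := by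
  induction n with
  | zero => rfl
  | succ n ih =>
    conv_rhs => rw [show 2 * (n + 1) + 1 = (2 * n + 1) + 1 + 1 from by omega,
      nupow_succ, nupow_succ]
    rw [nupow_succ, ih, mul_assoc]

/-- Degenerate Cauchy–Schwarz: if `u((star n) n) = 0` then `n` pairs to zero with everything. -/
lemma csq (u : A →ₗ[ℂ] ℂ)
    (hpos : ∀ x : A, 0 ≤ (u (star x * x)).re ∧ (u (star x * x)).im = 0)
    (n : A) (hn : u (star n * n) = 0) (a : A) :
    u (star a * n) = 0 ∧ u (star n * a) = 0 := by
  have key : ∀ b : A, u (star b * n) + u (star n * b) = 0 := by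
    intro b
    have expand : ∀ t : ℝ, u (star (b + (t : ℂ) • n) * (b + (t : ℂ) • n))
        = u (star b * b) + (t : ℂ) * (u (star b * n) + u (star n * b)) := by
      intro t
      have hsb : star ((t : ℂ) • n) = (t : ℂ) • star n := by
        rw [star_smul, Complex.star_def, Complex.conj_ofReal]
      rw [star_add, hsb, add_mul, mul_add, mul_add]
      simp only [smul_mul_assoc, mul_smul_comm, map_add, map_smul, smul_eq_mul, smul_smul, hn]
      ring
    set c1 := u (star b * n) + u (star n * b) with hc1
    have him : c1.im = 0 := by
      have h := (hpos (b + (1 : ℝ) • n)).2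
      have h0 := (hpos b).2
      rw [show ((1:ℝ) • n : A) = ((1:ℝ):ℂ) • n from by norm_num] at h
      rw [expand 1] at h
      simp only [Complex.add_im, Complex.ofReal_one, one_mul, h0, zero_add] at h
      exact h
    have hre : c1.re = 0 := by
      by_contra hne
      set r := c1.re with hr
      set t : ℝ := (-(u (star b * b)).re - 1) / r with ht
      have h := (hpos (b + (t : ℂ) • n)).1
      rw [expand t] at h
      have hcalc : (u (star b * b) + (t : ℂ) * c1).re
          = (u (star b * b)).re + t * r := by
        simp [Complex.add_re, Complex.mul_re, Complex.ofReal_re, Complex.ofReal_im, hr]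
      rw [hcalc] at h
      have : t * r = -(u (star b * b)).re - 1 := by
        rw [ht, div_mul_cancel₀ _ hne]
      rw [this] at h
      linarith
    have : c1 = 0 := Complex.ext hre him
    rw [hc1] at this
    exact this
  have k1 := key a
  have k2 := key (Complex.I • a)
  have hstar : star (Complex.I • a) = (-Complex.I) • star a := by
    rw [star_smul, Complex.star_def, Complex.conj_I]
  rw [hstar, smul_mul_assoc, mul_smul_comm, map_smul, map_smul, smul_eq_mul, smul_eq_mul]
    at k2
  have hq : u (star n * a) = 0 := by
    have h : Complex.I * ((2:ℂ) * u (star n * a)) = 0 := by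
      linear_combination Complex.I * k1 + k2
    have h' := (mul_eq_zero.mp h).resolve_left Complex.I_ne_zero
    exact (mul_eq_zero.mp h').resolve_left two_ne_zero
  have hp : u (star a * n) = 0 := by linear_combination k1 - hq
  exact ⟨hp, hq⟩

end aux

/-- Let `A` be a (not necessarily unital) complex `*`-algebra and `u : A → ℂ` a positive
linear map. If there is `i ≥ 1` with `u(xⁱ) = 0` for every self-adjoint `x`, then
`u(x y z) = 0` for all `x, y, z ∈ A`. -/
theorem stmt13 {A : Type*} [NonUnitalRing A] [Module ℂ A] [SMulCommClass ℂ A A]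
    [IsScalarTower ℂ A A] [StarRing A] [StarModule ℂ A]
    (u : A →ₗ[ℂ] ℂ)
    (hpos : ∀ x : A, 0 ≤ (u (star x * x)).re ∧ (u (star x * x)).im = 0)
    (hvanish : ∃ i : ℕ, 1 ≤ i ∧ ∀ x : A, star x = x → u (nupow x (i - 1)) = 0) :
    ∀ x y z : A, u (x * y * z) = 0 := by
  obtain ⟨i, hi, hv⟩ := hvanish
  set k := i - 1 with hk
  -- u (nupow x m) = 0 for self-adjoint x and m ≥ k
  have hbig : ∀ x : A, star x = x → ∀ m, k ≤ m → u (nupow x m) = 0 := by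
    intro x hx m hm
    rcases eq_or_lt_of_le hm with heq | hlt
    · rw [← heq]; exact hv x hx
    · have hNN : u (star (nupow x k) * nupow x k) = 0 := by
        rw [star_nupow x hx, ← nupow_add]
        have : k + k + 1 = 2 * k + 1 := by omega
        rw [this, ← nupow_sq]
        exact hv (x * x) (by rw [star_mul, hx])
      obtain ⟨-, h2⟩ := csq u hpos _ hNN (nupow x (m - k - 1))
      rw [star_nupow x hx, ← nupow_add] at h2
      have : k + (m - k - 1) + 1 = m := by omega
      rwa [this] at h2
  -- downward induction to m ≥ 2
  have hdown : ∀ j, ∀ x : A, star x = x → ∀ m, 2 ≤ m → k ≤ m + j → u (nupow x m) = 0 := by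
    intro j
    induction j with
    | zero => intro x hx m h2 hkm; exact hbig x hx m (by omega)
    | succ j ih =>
      intro x hx m h2 hkm
      have hNN : u (star (nupow x (m - 1)) * nupow x (m - 1)) = 0 := by
        rw [star_nupow x hx, ← nupow_add]
        exact ih x hx ((m - 1) + (m - 1) + 1) (by omega) (by omega)
      obtain ⟨h1, -⟩ := csq u hpos _ hNN x
      rw [hx] at h1
      have hm : nupow x m = x * nupow x (m - 1) := by
        conv_lhs => rw [show m = (m - 1) + 1 by omega]
        rw [nupow_succ]
      rw [hm]
      exact h1
  have hcube : ∀ x : A, star x = x → ∀ m, 2 ≤ m → u (nupow x m) = 0 :=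
    fun x hx m h2 => hdown k x hx m h2 (by omega)
  -- squares of self-adjoint elements are null
  have hsq : ∀ p : A, star p = p → ∀ v : A, u (v * (p * p)) = 0 ∧ u ((p * p) * v) = 0 := by
    intro p hp v
    have hstarsq : star (p * p) = p * p := by rw [star_mul, hp]
    have hNN : u (star (p * p) * (p * p)) = 0 := by
      rw [hstarsq]
      have : (p * p) * (p * p) = nupow p 3 := by
        show _ = p * (p * (p * p))
        noncomm_ring
      rw [this]
      exact hcube p hp 3 (by norm_num)
    constructor
    · have := (csq u hpos _ hNN (star v)).1; rwa [star_star] at this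
    · have := (csq u hpos _ hNN v).2; rwa [hstarsq] at this
  -- anticommutators are null
  have hac : ∀ p q : A, star p = p → star q = q →
      ∀ v : A, u (v * (p * q + q * p)) = 0 ∧ u ((p * q + q * p) * v) = 0 := by
    intro p q hp hq
    have hn : star (p * q + q * p) = p * q + q * p := by
      rw [star_add, star_mul, star_mul, hp, hq, add_comm]
    have hrep : p * q + q * p = (p + q) * (p + q) - p * p - q * q := by noncomm_ring
    have hNN : u (star (p * q + q * p) * (p * q + q * p)) = 0 := by
      rw [hn]
      conv_lhs => rw [show ((p*q+q*p) * (p*q+q*p) : A)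
        = (p*q+q*p) * ((p+q)*(p+q)) - (p*q+q*p) * (p*p) - (p*q+q*p) * (q*q) from by
          rw [← mul_sub, ← mul_sub, ← hrep]]
      rw [map_sub, map_sub,
        (hsq (p + q) (by rw [star_add, hp, hq]) _).1, (hsq p hp _).1, (hsq q hq _).1]
      ring
    intro v
    constructor
    · have := (csq u hpos _ hNN (star v)).1; rwa [star_star] at this
    · have := (csq u hpos _ hNN v).2; rwa [hn] at this
  -- u (v * (p * (p * q))) = 0 for self-adjoint p, q
  have hmid : ∀ p q : A, star p = p → star q = q → ∀ v : A, u (v * (p * (p * q))) = 0 := by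
    intro p q hp hq v
    set s : A := Complex.I • (p * q - q * p) with hs
    have hss : star s = s := by
      rw [hs, star_smul, Complex.star_def, Complex.conj_I, star_sub, star_mul, star_mul,
        hp, hq, neg_smul, smul_sub, smul_sub]
      abel
    have h1 := (hac p s hp hss v).1
    have h2 : p * s + s * p = Complex.I • (p * (p * q) - q * p * p) := by
      rw [hs, mul_smul_comm, smul_mul_assoc, ← smul_add]
      congr 1
      noncomm_ring
    rw [h2, mul_smul_comm, map_smul, smul_eq_mul] at h1
    have hI : u (v * (p * (p * q) - q * p * p)) = 0 :=
      (mul_eq_zero.mp h1).resolve_left Complex.I_ne_zero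
    rw [mul_sub, map_sub] at hI
    have h3 : u (v * (q * p * p)) = 0 := by
      have : v * (q * p * p) = (v * q) * (p * p) := by noncomm_ring
      rw [this]; exact (hsq p hp (v * q)).1
    rw [h3, sub_zero] at hI
    exact hI
  -- self-adjoint triple products
  have hsa3 : ∀ a b c : A, star a = a → star b = b → star c = c → u (a * b * c) = 0 := by
    intro a b c ha hb hc
    have hNN : u (star (b * c) * (b * c)) = 0 := by
      rw [show star (b * c) = c * b from by rw [star_mul, hb, hc]]
      have : c * b * (b * c) = c * (b * (b * c)) := by noncomm_ring
      rw [this]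
      exact hmid b c hb hc c
    have := (csq u hpos _ hNN a).1
    rw [ha, ← mul_assoc] at this
    exact this
  -- decomposition into self-adjoint parts
  have dec : ∀ w : A, ∃ a b : A, star a = a ∧ star b = b ∧
      w = ((1 : ℂ)/2) • a + (Complex.I/2) • b := by
    intro w
    refine ⟨w + star w, Complex.I • (star w - w), ?_, ?_, ?_⟩
    · rw [star_add, star_star, add_comm]
    · rw [star_smul, Complex.star_def, Complex.conj_I, star_sub, star_star, neg_smul,
        smul_sub, smul_sub]
      abel
    · have hII : (Complex.I/2) • (Complex.I • (star w - w)) = (-(1:ℂ)/2) • (star w - w) := by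
        rw [smul_smul]
        norm_num [div_mul_eq_mul_div, Complex.I_mul_I]
      rw [hII]
      have : ((1:ℂ)/2) • (w + star w) + (-(1:ℂ)/2) • (star w - w)
          = ((1:ℂ)/2) • w + ((1:ℂ)/2) • w := by
        rw [smul_add, smul_sub, neg_div, neg_smul, neg_smul, sub_neg_eq_add]
        abel
      rw [this, ← add_smul]
      norm_num
  intro x y z
  obtain ⟨a1, a2, ha1, ha2, hx⟩ := dec x
  obtain ⟨b1, b2, hb1, hb2, hy⟩ := dec y
  obtain ⟨c1, c2, hc1, hc2, hz⟩ := dec z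
  rw [hx, hy, hz]
  simp only [add_mul, mul_add, smul_mul_assoc, mul_smul_comm, map_add, map_smul, smul_eq_mul]
  rw [hsa3 _ _ _ ha1 hb1 hc1, hsa3 _ _ _ ha1 hb1 hc2, hsa3 _ _ _ ha1 hb2 hc1,
    hsa3 _ _ _ ha1 hb2 hc2, hsa3 _ _ _ ha2 hb1 hc1, hsa3 _ _ _ ha2 hb1 hc2,
    hsa3 _ _ _ ha2 hb2 hc1, hsa3 _ _ _ ha2 hb2 hc2]
  ring
end

section
/- Let μ be a Young diagram with L cells and let c ≥ 1 be an integer. Let d be the number of cells of μ of content c, i.e. the number of cells (i, j) of μ with j = i + c. Then d·(d + c) ≤ L; in particular d ≤ L/c. -/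
/-- Let `μ` be a Young diagram with `L` cells and `c ≥ 1`. If `d` is the number of cells
of `μ` of content `c` (cells `(i, j)` with `j = i + c`), then `d (d + c) ≤ L`;
in particular `d ≤ L / c`. -/
theorem stmt14 (μ : YoungDiagram) (c : ℕ) (hc : 1 ≤ c)
    (d : ℕ) (hd : d = (μ.cells.filter (fun p => p.2 = p.1 + c)).card) :
    d * (d + c) ≤ μ.card ∧ (d : ℝ) ≤ (μ.card : ℝ) / (c : ℝ) := by
  have key : d * (d + c) ≤ μ.card := by
    rcases Nat.eq_zero_or_pos d with h0 | hdpos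
    · simp [h0]
    -- T = set of row indices of cells of content c
    set S := μ.cells.filter (fun p => p.2 = p.1 + c) with hS
    set T := S.image Prod.fst with hT
    have hinj : Set.InjOn Prod.fst (S : Set (ℕ × ℕ)) := by
      intro p hp q hq hpq
      simp only [hS, Finset.coe_filter, Set.mem_setOf_eq] at hp hq
      have : p.2 = q.2 := by rw [hp.2, hq.2, hpq]
      exact Prod.ext hpq this
    have hcardT : T.card = d := by
      rw [hT, Finset.card_image_of_injOn hinj, hd]
    have hmemT : ∀ i ∈ T, (i, i + c) ∈ μ := by
      intro i hi
      simp only [hT, Finset.mem_image] at hi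
      obtain ⟨p, hp, rfl⟩ := hi
      simp only [hS, Finset.mem_filter, YoungDiagram.mem_cells] at hp
      rw [← hp.2]; exact hp.1
    have hne : T.Nonempty := by
      rw [← Finset.card_pos, hcardT]; exact hdpos
    set m := T.max' hne with hm
    have hmT : m ∈ T := T.max'_mem hne
    have hsub : T ⊆ Finset.range (m + 1) := by
      intro t ht
      exact Finset.mem_range.mpr (Nat.lt_succ_of_le (T.le_max' t ht))
    have hdm : d ≤ m + 1 := by
      rw [← hcardT]
      calc T.card ≤ (Finset.range (m + 1)).card := Finset.card_le_card hsub
        _ = m + 1 := Finset.card_range _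
    have hmmem : (m, m + c) ∈ μ := hmemT m hmT
    have hrect : (Finset.range d) ×ˢ (Finset.range (d + c)) ⊆ μ.cells := by
      intro p hp
      rw [Finset.mem_product, Finset.mem_range, Finset.mem_range] at hp
      rw [YoungDiagram.mem_cells]
      exact μ.up_left_mem (by omega) (by omega) hmmem
    calc d * (d + c) = ((Finset.range d) ×ˢ (Finset.range (d + c))).card := by
          simp [Finset.card_product]
      _ ≤ μ.cells.card := Finset.card_le_card hrect
  refine ⟨key, ?_⟩
  rw [le_div_iff₀ (by positivity)]
  have : d * c ≤ μ.card := le_trans (Nat.mul_le_mul_left d (by omega)) key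
  exact_mod_cast this
end

section
/- There are no elements w, u, v of F_r satisfying all of the following: ‖u‖ < ‖w‖, ‖v‖ < ‖w‖, ‖w·u‖ = ‖w‖ + ‖u‖, ‖v·w⁻¹‖ = ‖v‖ + ‖w‖, and w·u = v·w⁻¹. -/
/-- There are no `w, u, v` in the free group `F_r` with `‖u‖ < ‖w‖`, `‖v‖ < ‖w‖`, such
that the products `w·u` and `v·w⁻¹` are reduced (no cancellation) and `w·u = v·w⁻¹`. -/
theorem stmt15 (r : ℕ) (hr : 1 ≤ r) :
    ¬ ∃ w u v : FreeGroup (Fin r),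
        FreeGroup.norm u < FreeGroup.norm w ∧
        FreeGroup.norm v < FreeGroup.norm w ∧
        FreeGroup.norm (w * u) = FreeGroup.norm w + FreeGroup.norm u ∧
        FreeGroup.norm (v * w⁻¹) = FreeGroup.norm v + FreeGroup.norm w ∧
        w * u = v * w⁻¹ := by
  rintro ⟨w, u, v, hu, hv, h1, h2, heq⟩
  set A := w.toWord with hA
  set B := u.toWord with hB
  set C := v.toWord with hC
  set n := A.length with hn
  set m := B.length with hm
  -- the products are reduced concatenations
  have e1 : (w * u).toWord = A ++ B := by
    apply (FreeGroup.toWord_mul_sublist w u).eq_of_length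
    simpa [FreeGroup.norm] using h1
  have e2 : (v * w⁻¹).toWord = C ++ (w⁻¹).toWord := by
    apply (FreeGroup.toWord_mul_sublist v w⁻¹).eq_of_length
    have hinv : FreeGroup.norm w⁻¹ = FreeGroup.norm w := FreeGroup.norm_inv_eq
    simp only [FreeGroup.norm] at h2 hinv ⊢
    simp [h2, hinv]
  have key : A ++ B = C ++ FreeGroup.invRev A := by
    rw [← e1, heq, e2, FreeGroup.toWord_inv]
  have hClen : C.length = m := by
    have := congrArg List.length key
    simp only [List.length_append, FreeGroup.invRev_length] at this
    omega
  have hmn : m < n := hu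
  -- indexwise consequence
  have idx : ∀ j (hj1 : m ≤ j) (hj2 : j < n),
      A[j]'(by omega) = ((A[n - 1 - (j - m)]'(by omega)).1,
        !(A[n - 1 - (j - m)]'(by omega)).2) := by
    intro j hj1 hj2
    have hjlt : j < (A ++ B).length := by simp only [List.length_append, ← hn, ← hm]; omega
    have h := List.getElem_of_eq key hjlt
    rw [List.getElem_append_left (by omega), List.getElem_append_right (by omega)] at h
    simp only [FreeGroup.invRev, List.getElem_reverse, List.getElem_map] at h
    rw [h]
    congr 2 <;> simp [hClen, hn]
  rcases Nat.even_or_odd (n + m) with he | ho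
  · -- n + m even: adjacent inverse pair in A, contradicting reducedness of A
    obtain ⟨k, hk⟩ := he
    set j := k - 1 with hjdef
    have hj1 : m ≤ j := by omega
    have hj2 : j + 1 < n := by omega
    have h := idx j hj1 (by omega)
    have hrw : n - 1 - (j - m) = j + 1 := by omega
    simp only [hrw] at h
    have hnext : A[j+1]'(by omega) = ((A[j]'(by omega)).1, !(A[j]'(by omega)).2) := by
      have h1' := congrArg Prod.fst h
      have h2' := congrArg Prod.snd h
      simp only at h1' h2'
      refine Prod.ext h1'.symm ?_
      rw [h2']; simp
    have hdrop : A.drop j = (A[j]'(by omega)) :: (A[j+1]'(by omega)) :: A.drop (j+2) := by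
      rw [List.drop_eq_getElem_cons (by omega), List.drop_eq_getElem_cons (by omega)]
    have hAeq : A = A.take j ++ ((A[j]'(by omega)).1, (A[j]'(by omega)).2) ::
        ((A[j]'(by omega)).1, !(A[j]'(by omega)).2) :: A.drop (j+2) := by
      conv_lhs => rw [← List.take_append_drop j A]
      rw [hdrop, hnext]
    exact FreeGroup.reduce.not ((FreeGroup.reduce_toWord w).trans hAeq)
  · -- n + m odd: a letter equals its own inverse, absurd
    obtain ⟨k, hk⟩ := ho
    have hj1 : m ≤ k := by omega
    have hj2 : k < n := by omega
    have h := idx k hj1 hj2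
    have hrw : n - 1 - (k - m) = k := by omega
    simp only [hrw] at h
    have := congrArg Prod.snd h
    simp at this
end
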